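/- Let f : B₁ ⊂ ℝ^{n+1} → ℝ belong to C^{k,α}_{xr}(Γ ∩ B₁) with norm ≤ M, and let P_0, P_Z be its tangent polynomials (in the variables (x,r)) at 0 ∈ Γ and at Z ∈ Γ with |Z| = λ. Then ‖P₀ − P_Z‖_{L^∞(B_{2λ})} ≤ Cλ^{k+α}, and the coefficients of the degree-m parts of P₀ and P_Z differ by at most C|Z|^{k−m+α}, with C depending only on n, k, α, M. -/

import Mathlib

open Metric Finset

/-- In `ℝ^{n+1}` (with `n = m+1`): the index of the coordinate `xₙ`. -/
def idxn (m : ℕ) : Fin (m + 2) := (Fin.last m).castSucc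

/-- The index of the coordinate `x_{n+1}`. -/
def idxlast (m : ℕ) : Fin (m + 2) := Fin.last (m + 1)

/-- The boundary `Γ = {(x', g(x'))} ⊂ ℝⁿ` of the slit, embedded in `ℝ^{n+1}`
as `Γ × {0}`. -/
def GammaE (m : ℕ) (g : EuclideanSpace ℝ (Fin m) → ℝ) :
    Set (EuclideanSpace ℝ (Fin (m + 2))) :=
  {X | X (idxlast m) = 0 ∧ X (idxn m) = g (WithLp.toLp 2 (fun i : Fin m => X (i.castSucc.castSucc)))}

/-- `r(X)`: the distance in `ℝ^{n+1}` from `X` to `Γ`. -/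
noncomputable def rGamma (m : ℕ) (g : EuclideanSpace ℝ (Fin m) → ℝ)
    (X : EuclideanSpace ℝ (Fin (m + 2))) : ℝ := infDist X (GammaE m g)

/-- The value at `X` of the polynomial in `(x, r)` (degree `≤ k`) with coefficients `a`. -/
noncomputable def polyVal (m k : ℕ) (g : EuclideanSpace ℝ (Fin m) → ℝ)
    (a : (Fin (m + 1) → ℕ) → ℕ → ℝ)
    (X : EuclideanSpace ℝ (Fin (m + 2))) : ℝ :=
  ∑ μ : Fin (m + 1) → Fin (k + 1), ∑ j ∈ range (k + 1),
    a (fun i => (μ i : ℕ)) j *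
      (∏ i : Fin (m + 1), (X i.castSucc) ^ ((μ i : ℕ))) * (rGamma m g X) ^ j

/-!
Part one is the triangle inequality through `f` on `B_{2λ} ⊂ B₁`. For part two, `Q = P₀ - P_Z`
is a polynomial in `(x, r)` bounded by `C λ^{k+α}` on `B_{2λ}`. Every `(λ y', λ s)` with `y'` in
a fixed small box and `s ∈ [1, 3/2]` is the `(x, r)`-coordinate vector of a point of `B_{2λ}`:
along the vertical line over `λ y'`, `r` is continuous, at least the height, and at most
`2 λ |y'|` at height `0` because `g` is `1`-Lipschitz with `g 0 = 0`; the intermediate value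
theorem does the rest. So `y ↦ Q(λ y)` is bounded by `C λ^{k+α}` on a fixed product grid with
`k + 1` nodes per variable. A polynomial of partial degrees `≤ k` vanishing on such a grid is
zero (combinatorial Nullstellensatz), hence by finite dimensionality its coefficients, which are
`λ^{|μ|+j} (a₀ - a_Z)_{μ j}`, are bounded by a fixed multiple of `C λ^{k+α}`.
-/

section BoxPoly

variable {ι : Type*} [Fintype ι] [DecidableEq ι] {K : ℕ}

def boxPoly (c : (ι → Fin (K + 1)) → ℝ) (y : ι → ℝ) : ℝ :=
  ∑ ν, c ν * ∏ i, y i ^ (ν i : ℕ)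

lemma boxPoly_sub (c d : (ι → Fin (K + 1)) → ℝ) (y : ι → ℝ) :
    boxPoly (c - d) y = boxPoly c y - boxPoly d y := by
  simp only [boxPoly, Pi.sub_apply, sub_mul, sum_sub_distrib]

lemma boxPoly_smul (c : (ι → Fin (K + 1)) → ℝ) (l : ℝ) (y : ι → ℝ) :
    boxPoly c (l • y) = boxPoly (fun ν => l ^ (∑ i, (ν i : ℕ)) * c ν) y := by
  refine sum_congr rfl fun ν _ => ?_
  simp only [Pi.smul_apply, smul_eq_mul, mul_pow, prod_mul_distrib, prod_pow_eq_pow_sum]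
  ring

open MvPolynomial in
lemma boxPoly_eq_eval (c : (ι → Fin (K + 1)) → ℝ) (y : ι → ℝ) :
    boxPoly c y =
      eval y (∑ ν, monomial (Finsupp.equivFunOnFinite.symm fun i => (ν i : ℕ)) (c ν)) := by
  simp [boxPoly, eval_monomial, Finsupp.prod_fintype]

open MvPolynomial in
lemma eq_zero_of_boxPoly_grid_eq_zero (v : ι → Fin (K + 1) → ℝ)
    (hv : ∀ i, Function.Injective (v i)) {c : (ι → Fin (K + 1)) → ℝ}
    (h : ∀ σ : ι → Fin (K + 1), boxPoly c (fun i => v i (σ i)) = 0) :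
    c = 0 := by
  set e : (ι → Fin (K + 1)) → ι →₀ ℕ := fun ν => Finsupp.equivFunOnFinite.symm fun i => (ν i : ℕ)
  have he : Function.Injective e := fun ν ν' hνν' => funext fun i =>
    Fin.ext (congrFun (Finsupp.equivFunOnFinite.symm.injective hνν') i)
  set P : MvPolynomial ι ℝ := ∑ ν, monomial (e ν) (c ν)
  have hP : P = 0 := by
    refine eq_zero_of_eval_zero_at_prod_finset P (fun i => univ.image (v i)) (fun i => ?_) ?_
    · rw [card_image_of_injective _ (hv i), card_univ, Fintype.card_fin,
        degreeOf_lt_iff K.succ_pos]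
      intro s hs
      obtain ⟨ν, -, hν⟩ := mem_biUnion.mp (support_sum hs)
      rw [Finset.mem_singleton.mp (support_monomial_subset hν)]
      exact (ν i).2
    · intro x hx
      choose σ _ hσ using fun i => mem_image.mp (hx i)
      rw [← boxPoly_eq_eval, ← funext hσ]
      exact h σ
  funext ν
  have := congrArg (coeff (e ν)) hP
  rwa [coeff_sum, sum_eq_single ν (fun ν' _ hν' => by rw [coeff_monomial, if_neg (he.ne hν')])
    (by simp), coeff_monomial, if_pos rfl, coeff_zero] at this

lemma exists_abs_coeff_le_of_grid (v : ι → Fin (K + 1) → ℝ) (hv : ∀ i, Function.Injective (v i)) :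
    ∃ C > 0, ∀ (c : (ι → Fin (K + 1)) → ℝ) (B : ℝ),
      (∀ σ : ι → Fin (K + 1), |boxPoly c (fun i => v i (σ i))| ≤ B) → ∀ ν, |c ν| ≤ C * B := by
  let T : ((ι → Fin (K + 1)) → ℝ) →ₗ[ℝ] (ι → Fin (K + 1)) → ℝ :=
    { toFun := fun c σ => boxPoly c (fun i => v i (σ i))
      map_add' := fun c d => by
        funext σ
        simp only [boxPoly, Pi.add_apply, add_mul, sum_add_distrib]
      map_smul' := fun a c => by
        funext σ
        simp only [boxPoly, Pi.smul_apply, smul_eq_mul, mul_sum, mul_assoc, RingHom.id_apply] }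
  have hT : Function.Injective T := by
    rw [← LinearMap.ker_eq_bot, LinearMap.ker_eq_bot']
    exact fun c hc => eq_zero_of_boxPoly_grid_eq_zero v hv fun σ => congrFun hc σ
  obtain ⟨C, hC, hCT⟩ := T.injective_iff_antilipschitz.mp hT
  refine ⟨C, hC, fun c B hB ν => ?_⟩
  have hB0 : 0 ≤ B := (abs_nonneg _).trans (hB fun _ => 0)
  calc |c ν| = ‖c ν‖ := (Real.norm_eq_abs _).symm
    _ ≤ ‖c‖ := norm_le_pi_norm c ν
    _ ≤ C * ‖T c‖ := ZeroHomClass.bound_of_antilipschitz T hCT c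
    _ ≤ C * B := by
      gcongr
      exact (pi_norm_le_iff_of_nonneg hB0).mpr fun σ => (Real.norm_eq_abs _).le.trans (hB σ)

end BoxPoly

section EuclideanSnoc

variable {n : ℕ}

def euclideanSnoc (x : EuclideanSpace ℝ (Fin n)) (t : ℝ) : EuclideanSpace ℝ (Fin (n + 1)) :=
  WithLp.toLp 2 (Fin.snoc (α := fun _ => ℝ) (WithLp.ofLp x) t)

@[simp]
lemma euclideanSnoc_castSucc (x : EuclideanSpace ℝ (Fin n)) (t : ℝ) (i : Fin n) :
    euclideanSnoc x t i.castSucc = x i :=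
  Fin.snoc_castSucc (α := fun _ => ℝ) ..

@[simp]
lemma euclideanSnoc_last (x : EuclideanSpace ℝ (Fin n)) (t : ℝ) :
    euclideanSnoc x t (Fin.last n) = t :=
  Fin.snoc_last (α := fun _ => ℝ) ..

lemma continuous_euclideanSnoc (x : EuclideanSpace ℝ (Fin n)) : Continuous (euclideanSnoc x) := by
  refine (PiLp.continuous_toLp 2 _).comp (continuous_pi fun i => ?_)
  induction i using Fin.lastCases with
  | last => simpa using continuous_id'
  | cast i => simpa using continuous_const

lemma norm_euclideanSnoc_le (x : EuclideanSpace ℝ (Fin n)) (t : ℝ) :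
    ‖euclideanSnoc x t‖ ≤ ‖x‖ + |t| := by
  rw [← sq_le_sq₀ (norm_nonneg _) (by positivity), EuclideanSpace.real_norm_sq_eq,
    Fin.sum_univ_castSucc]
  simp only [euclideanSnoc_castSucc, euclideanSnoc_last, ← EuclideanSpace.real_norm_sq_eq]
  nlinarith [norm_nonneg x, abs_nonneg t, sq_abs t]

lemma norm_init_le (x : EuclideanSpace ℝ (Fin (n + 1))) :
    ‖(WithLp.toLp 2 fun i : Fin n => x i.castSucc : EuclideanSpace ℝ (Fin n))‖ ≤ ‖x‖ := by
  rw [← sq_le_sq₀ (norm_nonneg _) (norm_nonneg _), EuclideanSpace.real_norm_sq_eq,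
    EuclideanSpace.real_norm_sq_eq x, Fin.sum_univ_castSucc]
  exact le_add_of_nonneg_right (sq_nonneg _)

end EuclideanSnoc

lemma norm_le_of_forall_abs_le {n : ℕ} (x : EuclideanSpace ℝ (Fin n)) {δ : ℝ} (hδ : 0 ≤ δ)
    (hx : ∀ i, |x i| ≤ δ) : ‖x‖ ≤ n * δ := by
  rw [← sq_le_sq₀ (norm_nonneg _) (by positivity), EuclideanSpace.real_norm_sq_eq]
  calc ∑ i, x i ^ 2 ≤ ∑ _i : Fin n, δ ^ 2 :=
        sum_le_sum fun i _ => sq_le_sq' (abs_le.mp (hx i)).1 (abs_le.mp (hx i)).2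
    _ = n * δ ^ 2 := by simp
    _ ≤ (n * δ) ^ 2 := by
        rw [mul_pow]
        exact mul_le_mul_of_nonneg_right (by exact_mod_cast Nat.le_self_pow two_ne_zero n)
          (sq_nonneg δ)

section Slit

variable {m : ℕ} {g : EuclideanSpace ℝ (Fin m) → ℝ}

lemma zero_mem_GammaE (hg0 : g 0 = 0) : (0 : EuclideanSpace ℝ (Fin (m + 2))) ∈ GammaE m g :=
  ⟨rfl, hg0.symm⟩

lemma abs_idxlast_le_rGamma (hg0 : g 0 = 0) (X : EuclideanSpace ℝ (Fin (m + 2))) :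
    |X (idxlast m)| ≤ rGamma m g X :=
  (le_infDist ⟨0, zero_mem_GammaE hg0⟩).mpr fun Y hY => by
    simpa [hY.1] using PiLp.norm_apply_le (X - Y) (idxlast m) |>.trans_eq (dist_eq_norm X Y).symm

lemma rGamma_le_abs_sub (X : EuclideanSpace ℝ (Fin (m + 2))) (hX : X (idxlast m) = 0) :
    rGamma m g X ≤
      |X (idxn m) - g (WithLp.toLp 2 fun i : Fin m => X i.castSucc.castSucc)| := by
  set w : EuclideanSpace ℝ (Fin m) := WithLp.toLp 2 fun i : Fin m => X i.castSucc.castSucc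
  set Y := X - EuclideanSpace.single (idxn m) (X (idxn m) - g w)
  have hY : Y ∈ GammaE m g := by
    refine ⟨?_, ?_⟩
    · simpa [Y, idxn, idxlast, Fin.castSucc_ne_last] using hX
    · simp [Y, w, idxn]
  calc rGamma m g X ≤ dist X Y := infDist_le_dist_of_mem hY
    _ = _ := by simp [Y]

lemma exists_rGamma_euclideanSnoc_eq (hg0 : g 0 = 0) (hg : ∀ w, |g w| ≤ ‖w‖)
    (x : EuclideanSpace ℝ (Fin (m + 1))) {s : ℝ} (hs : 2 * ‖x‖ ≤ s) :
    ∃ t ∈ Set.Icc 0 s, rGamma m g (euclideanSnoc x t) = s := by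
  have hρ : Continuous fun t => rGamma m g (euclideanSnoc x t) :=
    (continuous_infDist_pt _).comp (continuous_euclideanSnoc x)
  have hlow : rGamma m g (euclideanSnoc x 0) ≤ s :=
    calc rGamma m g (euclideanSnoc x 0)
        ≤ |x (Fin.last m) - g (WithLp.toLp 2 fun i : Fin m => x i.castSucc)| :=
          (rGamma_le_abs_sub _ (euclideanSnoc_last x 0)).trans_eq (by simp [idxn])
      _ ≤ |x (Fin.last m)| + |g (WithLp.toLp 2 fun i : Fin m => x i.castSucc)| := abs_sub _ _
      _ ≤ ‖x‖ + ‖x‖ := add_le_add (PiLp.norm_apply_le x _) ((hg _).trans (norm_init_le x))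
      _ ≤ s := by linarith
  have hhigh : s ≤ rGamma m g (euclideanSnoc x s) := by
    have := abs_idxlast_le_rGamma hg0 (euclideanSnoc x s)
    rwa [idxlast, euclideanSnoc_last, abs_of_nonneg (by linarith [norm_nonneg x])] at this
  exact intermediate_value_Icc (by linarith [norm_nonneg x]) hρ.continuousOn ⟨hlow, hhigh⟩

end Slit

section XRCoords

variable {m : ℕ} {g : EuclideanSpace ℝ (Fin m) → ℝ}

noncomputable def xrCoords (m : ℕ) (g : EuclideanSpace ℝ (Fin m) → ℝ)
    (X : EuclideanSpace ℝ (Fin (m + 2))) : Fin (m + 2) → ℝ :=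
  Fin.snoc (α := fun _ => ℝ) (fun i : Fin (m + 1) => X i.castSucc) (rGamma m g X)

def boxCoeffs (k : ℕ) (a : (Fin (m + 1) → ℕ) → ℕ → ℝ) : (Fin (m + 2) → Fin (k + 1)) → ℝ :=
  fun ν => a (fun i => ν i.castSucc) (ν (Fin.last (m + 1)))

lemma polyVal_eq_boxPoly {k : ℕ} (a : (Fin (m + 1) → ℕ) → ℕ → ℝ)
    (X : EuclideanSpace ℝ (Fin (m + 2))) :
    polyVal m k g a X = boxPoly (boxCoeffs k a) (xrCoords m g X) := by
  rw [boxPoly, ← (Fin.snocEquiv fun _ => Fin (k + 1)).sum_comp, Fintype.sum_prod_type, sum_comm,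
    polyVal]
  refine sum_congr rfl fun μ _ => ?_
  rw [← Fin.sum_univ_eq_sum_range]
  refine sum_congr rfl fun j _ => ?_
  simp [boxCoeffs, xrCoords, Fin.snocEquiv, Fin.prod_univ_castSucc]
  ring

lemma exists_xrCoords_eq_smul (hg0 : g 0 = 0) (hg : ∀ w, |g w| ≤ ‖w‖) {l : ℝ} (hl : 0 < l)
    (y : Fin (m + 2) → ℝ)
    (hy : 2 * ‖(WithLp.toLp 2 (Fin.init y) : EuclideanSpace ℝ (Fin (m + 1)))‖ ≤
      y (Fin.last (m + 1))) :
    ∃ X, ‖X‖ ≤ l * (‖(WithLp.toLp 2 (Fin.init y) : EuclideanSpace ℝ (Fin (m + 1)))‖ +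
      y (Fin.last (m + 1))) ∧ xrCoords m g X = l • y := by
  set x : EuclideanSpace ℝ (Fin (m + 1)) := l • WithLp.toLp 2 (Fin.init y)
  have hx : ‖x‖ = l * ‖(WithLp.toLp 2 (Fin.init y) : EuclideanSpace ℝ (Fin (m + 1)))‖ := by
    rw [norm_smul, Real.norm_of_nonneg hl.le]
  obtain ⟨t, ⟨ht0, hts⟩, hrt⟩ :=
    exists_rGamma_euclideanSnoc_eq hg0 hg x (s := l * y (Fin.last (m + 1))) (by nlinarith)
  refine ⟨euclideanSnoc x t, ?_, ?_⟩
  · calc ‖euclideanSnoc x t‖ ≤ ‖x‖ + |t| := norm_euclideanSnoc_le x t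
      _ ≤ _ := by rw [hx, abs_of_nonneg ht0]; linarith
  · funext i
    induction i using Fin.lastCases with
    | last => simp [xrCoords, hrt]
    | cast i => simp [xrCoords, x, Fin.init]

end XRCoords

noncomputable def gridNode (m k : ℕ) (i : Fin (m + 2)) (t : Fin (k + 1)) : ℝ :=
  if i = Fin.last (m + 1) then 1 + t / (2 * (k + 1)) else t / (4 * (m + 1) * (k + 1))

lemma gridNode_injective (m k : ℕ) (i : Fin (m + 2)) : Function.Injective (gridNode m k i) := by
  intro t s hts
  apply Fin.ext
  unfold gridNode at hts
  split_ifs at hts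
  · field_simp at hts
    exact_mod_cast add_left_cancel hts
  · field_simp at hts
    exact_mod_cast hts

lemma gridNode_castSucc_mem (m k : ℕ) (i : Fin (m + 1)) (t : Fin (k + 1)) :
    gridNode m k i.castSucc t ∈ Set.Icc (0 : ℝ) (1 / (4 * (m + 1))) := by
  have ht : (t : ℝ) ≤ k + 1 := by exact_mod_cast t.2.le
  rw [gridNode, if_neg (Fin.castSucc_lt_last i).ne]
  constructor
  · positivity
  · rw [div_le_div_iff₀ (by positivity) (by positivity)]
    nlinarith

lemma gridNode_last_mem (m k : ℕ) (t : Fin (k + 1)) :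
    gridNode m k (Fin.last (m + 1)) t ∈ Set.Icc (1 : ℝ) (3 / 2) := by
  have ht : (t : ℝ) ≤ k + 1 := by exact_mod_cast t.2.le
  rw [gridNode, if_pos rfl]
  constructor
  · have : 0 ≤ (t : ℝ) / (2 * (k + 1)) := by positivity
    linarith
  · have : (t : ℝ) / (2 * (k + 1)) ≤ 1 / 2 := by
      rw [div_le_div_iff₀ (by positivity) (by positivity)]
      linarith
    linarith

lemma exists_abs_sub_mul_pow_le_of_polyVal_sub_le (m k : ℕ) :
    ∃ C > 0, ∀ g : EuclideanSpace ℝ (Fin m) → ℝ, g 0 = 0 → (∀ w, |g w| ≤ ‖w‖) →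
      ∀ (a b : (Fin (m + 1) → ℕ) → ℕ → ℝ) (l B : ℝ), 0 < l →
      (∀ X, ‖X‖ < 2 * l → |polyVal m k g a X - polyVal m k g b X| ≤ B) →
      ∀ μ j, (∑ i, μ i) + j ≤ k → |a μ j - b μ j| * l ^ ((∑ i, μ i) + j) ≤ C * B := by
  obtain ⟨C, hC, hcoeff⟩ := exists_abs_coeff_le_of_grid (gridNode m k) (gridNode_injective m k)
  refine ⟨C, hC, fun g hg0 hg a b l B hl hB μ j hμj => ?_⟩
  set c : (Fin (m + 2) → Fin (k + 1)) → ℝ :=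
    fun ν => l ^ (∑ i, (ν i : ℕ)) * (boxCoeffs k a - boxCoeffs k b) ν
  have hgrid (σ : Fin (m + 2) → Fin (k + 1)) : |boxPoly c fun i => gridNode m k i (σ i)| ≤ B := by
    set y : Fin (m + 2) → ℝ := fun i => gridNode m k i (σ i)
    have hx : ‖(WithLp.toLp 2 (Fin.init y) : EuclideanSpace ℝ (Fin (m + 1)))‖ ≤ 1 / 4 :=
      (norm_le_of_forall_abs_le _ (by positivity) fun i =>
        have hi := gridNode_castSucc_mem m k i (σ i.castSucc)
        (abs_of_nonneg hi.1).trans_le hi.2).trans_eq (by push_cast; field_simp)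
    have hlast := gridNode_last_mem m k (σ (Fin.last (m + 1)))
    obtain ⟨X, hXnorm, hXy⟩ := exists_xrCoords_eq_smul hg0 hg hl y (by linarith [hlast.1])
    rw [← boxPoly_smul, ← hXy, boxPoly_sub, ← polyVal_eq_boxPoly, ← polyVal_eq_boxPoly]
    exact hB X (hXnorm.trans_lt (by nlinarith [hlast.2]))
  have hμ (i : Fin (m + 1)) : μ i < k + 1 :=
    Nat.lt_succ_of_le ((single_le_sum (fun i _ => Nat.zero_le (μ i)) (mem_univ i)).trans
      (le_of_add_le_left hμj))
  set ν : Fin (m + 2) → Fin (k + 1) :=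
    Fin.snoc (α := fun _ => Fin (k + 1)) (fun i => ⟨μ i, hμ i⟩) ⟨j, by omega⟩
  have hcν : c ν = l ^ ((∑ i, μ i) + j) * (a μ j - b μ j) := by
    simp [c, ν, boxCoeffs, Fin.sum_univ_castSucc]
  have := hcoeff c B hgrid ν
  rwa [hcν, abs_mul, abs_of_pos (by positivity), mul_comm] at this

lemma abs_le_norm_of_norm_fderiv_le_one {E : Type*} [NormedAddCommGroup E] [NormedSpace ℝ E]
    {g : E → ℝ} (hg : Differentiable ℝ g) (hg0 : g 0 = 0) (hd : ∀ y, ‖fderiv ℝ g y‖ ≤ 1) (w : E) :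
    |g w| ≤ ‖w‖ := by
  have hLip : LipschitzWith 1 g :=
    lipschitzWith_of_nnnorm_fderiv_le hg fun y => by simpa [← NNReal.coe_le_coe] using hd y
  simpa [hg0, Real.dist_eq] using hLip.dist_le_mul w 0

lemma abs_sub_le_of_approx {E : Type*} [SeminormedAddCommGroup E] {f p q : E → ℝ} {Z : E}
    {M β : ℝ} (hM : 0 ≤ M) (hβ : 0 ≤ β) (hZ : ‖Z‖ ≤ 1 / 4)
    (hp : ∀ X ∈ ball (0 : E) 1, |f X - p X| ≤ M * ‖X‖ ^ β)
    (hq : ∀ X ∈ ball (0 : E) 1, |f X - q X| ≤ M * ‖X - Z‖ ^ β) {X : E} (hX : ‖X‖ < 2 * ‖Z‖) :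
    |p X - q X| ≤ M * (2 ^ β + 3 ^ β) * ‖Z‖ ^ β := by
  have hX1 : X ∈ ball 0 1 := mem_ball_zero_iff.mpr (by linarith)
  have hXZ : ‖X - Z‖ ≤ 3 * ‖Z‖ := by linarith [norm_sub_le X Z]
  calc |p X - q X| ≤ |p X - f X| + |f X - q X| := abs_sub_le _ _ _
    _ = |f X - p X| + |f X - q X| := by rw [abs_sub_comm]
    _ ≤ M * (2 * ‖Z‖) ^ β + M * (3 * ‖Z‖) ^ β := by
      gcongr
      · exact (hp X hX1).trans (by gcongr)
      · exact (hq X hX1).trans (by gcongr)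
    _ = M * (2 ^ β + 3 ^ β) * ‖Z‖ ^ β := by
      rw [Real.mul_rpow (by norm_num) (norm_nonneg Z), Real.mul_rpow (by norm_num) (norm_nonneg Z)]
      ring

theorem tangent_polynomial_comparison_general (m k : ℕ) (α M : ℝ)
    (hα0 : 0 < α) (hM : 0 < M) :
    ∃ C > (0 : ℝ),
      ∀ g : EuclideanSpace ℝ (Fin m) → ℝ,
        ContDiff ℝ (↑(k + 2)) g → g 0 = 0 → gradient g 0 = 0 →
        (∀ j ≤ k + 2, ∀ y, ‖iteratedFDeriv ℝ j g y‖ ≤ 1) →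
        HolderWith 1 α.toNNReal (iteratedFDeriv ℝ (k + 2) g) →
      ∀ f : EuclideanSpace ℝ (Fin (m + 2)) → ℝ,
      ∀ Z ∈ GammaE m g, 0 < ‖Z‖ → ‖Z‖ ≤ 1 / 4 →
      ∀ a0 aZ : (Fin (m + 1) → ℕ) → ℕ → ℝ,
        (∀ μ j, k < (∑ i, μ i) + j → a0 μ j = 0) →
        (∀ μ j, k < (∑ i, μ i) + j → aZ μ j = 0) →
        (∀ μ j, |a0 μ j| ≤ M) → (∀ μ j, |aZ μ j| ≤ M) →
        (∀ X ∈ ball (0 : EuclideanSpace ℝ (Fin (m + 2))) 1,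
          |f X - polyVal m k g a0 X| ≤ M * ‖X‖ ^ ((k : ℝ) + α)) →
        (∀ X ∈ ball (0 : EuclideanSpace ℝ (Fin (m + 2))) 1,
          |f X - polyVal m k g aZ X| ≤ M * ‖X - Z‖ ^ ((k : ℝ) + α)) →
        (∀ X ∈ ball (0 : EuclideanSpace ℝ (Fin (m + 2))) (2 * ‖Z‖),
          |polyVal m k g a0 X - polyVal m k g aZ X| ≤ C * ‖Z‖ ^ ((k : ℝ) + α)) ∧
        (∀ μ : Fin (m + 1) → ℕ, ∀ j : ℕ, (∑ i, μ i) + j ≤ k →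
          |a0 μ j - aZ μ j| ≤ C * ‖Z‖ ^ ((k : ℝ) - ((∑ i, μ i : ℕ) + j : ℕ) + α)) := by
  obtain ⟨C₂, hC₂, hcoeff⟩ := exists_abs_sub_mul_pow_le_of_polyVal_sub_le m k
  set C₁ := M * (2 ^ ((k : ℝ) + α) + 3 ^ ((k : ℝ) + α))
  have hC₁ : 0 < C₁ := by positivity
  refine ⟨(1 + C₂) * C₁, by positivity, ?_⟩
  intro g hg hg0 _ hd _ f Z _ hZ0 hZ4 a0 aZ _ _ _ _ happ0 happZ
  have hdiff (X : EuclideanSpace ℝ (Fin (m + 2))) (hX : ‖X‖ < 2 * ‖Z‖) :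
      |polyVal m k g a0 X - polyVal m k g aZ X| ≤ C₁ * ‖Z‖ ^ ((k : ℝ) + α) :=
    abs_sub_le_of_approx hM.le (by positivity) hZ4 happ0 happZ hX
  have hg1 : ∀ w, |g w| ≤ ‖w‖ := abs_le_norm_of_norm_fderiv_le_one
    (hg.differentiable (by simp)) hg0 fun y => by simpa using hd 1 (by omega) y
  refine ⟨fun X hX => (hdiff X (mem_ball_zero_iff.mp hX)).trans ?_, fun μ j hμj => ?_⟩
  · gcongr
    exact le_mul_of_one_le_left hC₁.le (by linarith)
  · have h := hcoeff g hg0 hg1 a0 aZ ‖Z‖ _ hZ0 hdiff μ j hμj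
    rw [sub_add_eq_add_sub, Real.rpow_sub hZ0, Real.rpow_natCast, mul_div_assoc',
      le_div_iff₀ (by positivity)]
    nlinarith [mul_pos hC₁ (Real.rpow_pos_of_pos hZ0 ((k : ℝ) + α))]

/-- Tangent-polynomial comparison for `f ∈ C^{k,α}_{xr}(Γ ∩ B₁)`: if `P₀`, `P_Z` are the
tangent polynomials of `f` at `0 ∈ Γ` and at `Z ∈ Γ` with `|Z| = λ`, then
`‖P₀ - P_Z‖_{L∞(B_{2λ})} ≤ C λ^{k+α}`, and the coefficients of the degree-`d` parts of
`P₀` and `P_Z` differ by at most `C|Z|^{k-d+α}`, with `C = C(n,k,α,M)`. -/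
theorem tangent_polynomial_comparison (m k : ℕ) (α M : ℝ)
    (hα0 : 0 < α) (hα1 : α < 1) (hM : 0 < M) :
    ∃ C > (0 : ℝ),
      ∀ g : EuclideanSpace ℝ (Fin m) → ℝ,
        ContDiff ℝ (↑(k + 2)) g → g 0 = 0 → gradient g 0 = 0 →
        (∀ j ≤ k + 2, ∀ y, ‖iteratedFDeriv ℝ j g y‖ ≤ 1) →
        HolderWith 1 α.toNNReal (iteratedFDeriv ℝ (k + 2) g) →
      ∀ f : EuclideanSpace ℝ (Fin (m + 2)) → ℝ,
      ∀ Z ∈ GammaE m g, 0 < ‖Z‖ → ‖Z‖ ≤ 1 / 4 →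
      ∀ a0 aZ : (Fin (m + 1) → ℕ) → ℕ → ℝ,
        (∀ μ j, k < (∑ i, μ i) + j → a0 μ j = 0) →
        (∀ μ j, k < (∑ i, μ i) + j → aZ μ j = 0) →
        (∀ μ j, |a0 μ j| ≤ M) → (∀ μ j, |aZ μ j| ≤ M) →
        (∀ X ∈ ball (0 : EuclideanSpace ℝ (Fin (m + 2))) 1,
          |f X - polyVal m k g a0 X| ≤ M * ‖X‖ ^ ((k : ℝ) + α)) →
        (∀ X ∈ ball (0 : EuclideanSpace ℝ (Fin (m + 2))) 1,
          |f X - polyVal m k g aZ X| ≤ M * ‖X - Z‖ ^ ((k : ℝ) + α)) →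
        (∀ X ∈ ball (0 : EuclideanSpace ℝ (Fin (m + 2))) (2 * ‖Z‖),
          |polyVal m k g a0 X - polyVal m k g aZ X| ≤ C * ‖Z‖ ^ ((k : ℝ) + α)) ∧
        (∀ μ : Fin (m + 1) → ℕ, ∀ j : ℕ, (∑ i, μ i) + j ≤ k →
          |a0 μ j - aZ μ j| ≤ C * ‖Z‖ ^ ((k : ℝ) - ((∑ i, μ i : ℕ) + j : ℕ) + α)) :=
  tangent_polynomial_comparison_general m k α M hα0 hM
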